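/- Let Θ₁, Θ₂ be Young functions and θ₁ ∈ G_{θ₁}, θ₂ ∈ G_{θ₂}. If there exists C > 0 such that ‖f‖_{wM_{θ₁,Θ₁}(ℝⁿ)} ≤ C‖f‖_{wM_{θ₂,Θ₂}(ℝⁿ)} for every f ∈ wM_{θ₂,Θ₂}(ℝⁿ), then there exists C' > 0 with θ₂(t) ≤ C'θ₁(t) for all t > 0. -/

import Mathlib

open MeasureTheory Metric Set ENNReal

noncomputable section

/-- A Young function: convex, continuous, vanishing at 0, nonnegative, tending to ∞. -/
def IsYoung (Θ : ℝ → ℝ) : Prop :=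
  ConvexOn ℝ (Set.Ici 0) Θ ∧ ContinuousOn Θ (Set.Ici 0) ∧ Θ 0 = 0 ∧
  (∀ t, 0 ≤ t → 0 ≤ Θ t) ∧ Filter.Tendsto Θ Filter.atTop Filter.atTop

/-- Generalized inverse Θ⁻¹(s) = inf {r ≥ 0 : Θ r > s}. -/
def invY (Θ : ℝ → ℝ) (s : ℝ) : ℝ := sInf {r : ℝ | 0 ≤ r ∧ s < Θ r}

abbrev En (n : ℕ) := EuclideanSpace ℝ (Fin n)

/-- Luxemburg norm on a set B. -/
def luxNorm {n : ℕ} (Θ : ℝ → ℝ) (B : Set (En n)) (f : En n → ℝ) : ℝ≥0∞ :=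
  sInf {e : ℝ≥0∞ | ∃ b : ℝ, 0 < b ∧ e = ENNReal.ofReal b ∧
    ∫⁻ x in B, ENNReal.ofReal (Θ (|f x| / b)) ∂volume ≤ 1}

/-- Weak Luxemburg quasi-norm on a set B. -/
def wLuxNorm {n : ℕ} (Θ : ℝ → ℝ) (B : Set (En n)) (f : En n → ℝ) : ℝ≥0∞ :=
  sInf {e : ℝ≥0∞ | ∃ b : ℝ, 0 < b ∧ e = ENNReal.ofReal b ∧
    ∀ t : ℝ, 0 < t → ENNReal.ofReal (Θ t) * volume {x ∈ B | t < |f x| / b} ≤ 1}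

/-- Orlicz–Morrey norm (Deringoz–Guliyev–Samko). -/
def morreyNorm (n : ℕ) (θ Θ : ℝ → ℝ) (f : En n → ℝ) : ℝ≥0∞ :=
  ⨆ (a : En n) (r : ℝ) (_ : 0 < r),
    ENNReal.ofReal ((1 / θ ((volume (ball a r)).toReal ^ ((1:ℝ)/n))) *
      invY Θ (1 / (volume (ball a r)).toReal)) * luxNorm Θ (ball a r) f

/-- Weak Orlicz–Morrey quasi-norm. -/
def wMorreyNorm (n : ℕ) (θ Θ : ℝ → ℝ) (f : En n → ℝ) : ℝ≥0∞ :=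
  ⨆ (a : En n) (r : ℝ) (_ : 0 < r),
    ENNReal.ofReal ((1 / θ ((volume (ball a r)).toReal ^ ((1:ℝ)/n))) *
      invY Θ (1 / (volume (ball a r)).toReal)) * wLuxNorm Θ (ball a r) f

/-- The class G_θ : θ positive and decreasing, with t ↦ Θ⁻¹(t^{-n})/θ(t) almost decreasing. -/
def Gclass (n : ℕ) (Θ θ : ℝ → ℝ) : Prop :=
  (∀ t : ℝ, 0 < t → 0 < θ t) ∧
  (∀ s t : ℝ, 0 < s → s ≤ t → θ t ≤ θ s) ∧
  ∃ C : ℝ, 0 < C ∧ ∀ s t : ℝ, 0 < s → s ≤ t →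
    invY Θ (t ^ (-(n:ℝ))) / θ t ≤ C * (invY Θ (s ^ (-(n:ℝ))) / θ s)

/-- Θ₁ ≺ Θ₂. -/
def prec (Θ₁ Θ₂ : ℝ → ℝ) : Prop := ∃ C : ℝ, 0 < C ∧ ∀ t : ℝ, 0 < t → Θ₁ t ≤ Θ₂ (C * t)

/-- Θ₁⁻¹ ≲ Θ₂⁻¹. -/
def invLesssim (Θ₁ Θ₂ : ℝ → ℝ) : Prop :=
  ∃ C : ℝ, 0 < C ∧ ∀ t : ℝ, 0 < t → invY Θ₁ t ≤ C * invY Θ₂ t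

/-!
Test the embedding on the indicator χ of a ball B with |B|^{1/n} = t. On B itself the weak
Luxemburg norm of χ is at least 1/Θ₁⁻¹(1/|B|), so ‖χ‖_{wM_{θ₁,Θ₁}} ≥ 1/θ₁(t). Conversely, on any
ball B' the weak Luxemburg norm of χ is at most 1/Θ₂⁻¹(1/min(|B'|, |B|)); for |B'| ≤ |B| the
monotonicity of θ₂ bounds the B'-term by 1/θ₂(t), and for |B'| ≥ |B| the almost monotonicity of
Θ₂⁻¹(s^{-n})/θ₂(s) bounds it by a constant times 1/θ₂(t). Hence 1/θ₁(t) ≤ C K / θ₂(t).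
-/

lemma Real.rpow_one_div_natCast_rpow_neg {x : ℝ} (hx : 0 < x) {n : ℕ} (hn : n ≠ 0) :
    (x ^ ((1 : ℝ) / n)) ^ (-(n : ℝ)) = 1 / x := by
  rw [← Real.rpow_mul hx.le, one_div_mul_eq_div, neg_div, div_self (Nat.cast_ne_zero.2 hn),
    Real.rpow_neg_one, one_div]

section Young

variable {Θ : ℝ → ℝ}

lemma IsYoung.le_invY (hΘ : IsYoung Θ) {s c : ℝ} (h : ∀ r, 0 ≤ r → s < Θ r → c ≤ r) :
    c ≤ invY Θ s :=
  le_csInf (((hΘ.2.2.2.2.eventually_gt_atTop s).and (Filter.eventually_ge_atTop 0)).exists.imp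
    fun _ hr => ⟨hr.2, hr.1⟩) fun r hr => h r hr.1 hr.2

lemma IsYoung.invY_pos (hΘ : IsYoung Θ) {s : ℝ} (hs : 0 < s) : 0 < invY Θ s := by
  have hcont : Filter.Tendsto Θ (nhdsWithin 0 (Ici 0)) (nhds 0) := by
    simpa only [hΘ.2.2.1] using (hΘ.2.1 0 self_mem_Ici).tendsto
  -- Θ < s on some [0, ε), so Θ⁻¹(s) ≥ ε
  obtain ⟨ε, hε, hsmall⟩ := Metric.mem_nhdsWithin_iff.1 (hcont.eventually_lt_const hs)
  refine hε.trans_le (hΘ.le_invY fun _ hr hsr => not_lt.1 fun hrε => hsr.not_gt ?_)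
  exact hsmall ⟨by rwa [mem_ball, Real.dist_eq, sub_zero, abs_of_nonneg hr], hr⟩

lemma le_of_lt_invY {s u : ℝ} (hu : 0 ≤ u) (h : u < invY Θ s) : Θ u ≤ s :=
  not_lt.1 fun hsu => (csInf_le (s := {r | 0 ≤ r ∧ s < Θ r}) ⟨0, fun _ hr => hr.1⟩ ⟨hu, hsu⟩).not_gt h

end Young

section Luxemburg

variable {n : ℕ} {Θ : ℝ → ℝ}

lemma one_div_invY_le_wLuxNorm_indicator (hΘ : IsYoung Θ) {B : Set (En n)} (h0 : volume B ≠ 0)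
    (hB : volume B ≠ ⊤) :
    ENNReal.ofReal (1 / invY Θ (1 / (volume B).toReal)) ≤ wLuxNorm Θ B (B.indicator 1) := by
  set v := (volume B).toReal
  have hv : 0 < v := ENNReal.toReal_pos h0 hB
  refine le_sInf ?_
  rintro _ ⟨b, hb, rfl, hadm⟩
  -- if Θ ρ > 1/v and ρ < 1/b, the level set {χ_B/b > ρ} is all of B and violates admissibility
  have hb_le : 1 / b ≤ invY Θ (1 / v) := by
    refine hΘ.le_invY fun ρ hρ hΘρ => not_lt.1 fun hρb => ?_
    have hρ0 : 0 < ρ := hρ.lt_of_ne <| by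
      rintro rfl
      exact (one_div_pos.2 hv).not_ge (hΘ.2.2.1 ▸ hΘρ.le)
    have hlevel : {x ∈ B | ρ < |B.indicator 1 x| / b} = B := by
      ext x
      simp +contextual [hρb.trans_eq (one_div b)]
    have hadmρ := hadm ρ hρ0
    rw [hlevel, ← ENNReal.ofReal_toReal hB, ← ENNReal.ofReal_mul (hΘ.2.2.2.1 ρ hρ),
      ENNReal.ofReal_le_one] at hadmρ
    have := (div_lt_iff₀ hv).1 hΘρ
    linarith
  exact ENNReal.ofReal_le_ofReal ((one_div_le ((one_div_pos.2 hb).trans_le hb_le) hb).2 hb_le)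

lemma wLuxNorm_indicator_le (hΘ : IsYoung Θ) {A B : Set (En n)} {m : ℝ} (hm : 0 < m)
    (hAB : volume (A ∩ B) ≤ ENNReal.ofReal m) :
    wLuxNorm Θ A (B.indicator 1) ≤ ENNReal.ofReal (1 / invY Θ (1 / m)) := by
  set I := invY Θ (1 / m)
  have hI : 0 < I := hΘ.invY_pos (one_div_pos.2 hm)
  refine sInf_le ⟨1 / I, one_div_pos.2 hI, rfl, fun u hu => ?_⟩
  rcases lt_or_ge u I with huI | hIu
  · have hlevel : {x ∈ A | u < |B.indicator 1 x| / (1 / I)} ⊆ A ∩ B := by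
      refine fun x ⟨hxA, hlt⟩ => ⟨hxA, by_contra fun hxB => ?_⟩
      simp only [indicator_of_notMem hxB, abs_zero, zero_div] at hlt
      exact hu.not_gt hlt
    calc ENNReal.ofReal (Θ u) * volume {x ∈ A | u < |B.indicator 1 x| / (1 / I)}
        ≤ ENNReal.ofReal (1 / m) * ENNReal.ofReal m :=
          mul_le_mul' (ENNReal.ofReal_le_ofReal (le_of_lt_invY hu.le huI))
            ((measure_mono hlevel).trans hAB)
      _ = 1 := by
          rw [← ENNReal.ofReal_mul (by positivity), one_div_mul_cancel hm.ne', ENNReal.ofReal_one]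
  · have hlevel : {x ∈ A | u < |B.indicator 1 x| / (1 / I)} = ∅ := by
      refine eq_empty_of_forall_notMem fun x ⟨_, hlt⟩ => hlt.not_ge ?_
      have hχ : |B.indicator 1 x| ≤ (1 : ℝ) := by by_cases hx : x ∈ B <;> simp [hx]
      rw [one_div, div_inv_eq_mul]
      exact (mul_le_of_le_one_left hI.le hχ).trans hIu
    rw [hlevel, measure_empty, mul_zero]
    exact zero_le_one

end Luxemburg

section Morrey

variable {n : ℕ} {θ Θ : ℝ → ℝ}

def morreyWeight (n : ℕ) (θ Θ : ℝ → ℝ) (v : ℝ) : ℝ :=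
  1 / θ (v ^ ((1 : ℝ) / n)) * invY Θ (1 / v)

lemma wMorreyNorm_eq_iSup (f : En n → ℝ) :
    wMorreyNorm n θ Θ f = ⨆ (a : En n) (r : ℝ) (_ : 0 < r),
      ENNReal.ofReal (morreyWeight n θ Θ (volume (ball a r)).toReal) * wLuxNorm Θ (ball a r) f :=
  rfl

lemma one_div_le_wMorreyNorm_indicator_ball (hΘ : IsYoung Θ) (a : En n) {r : ℝ} (hr : 0 < r) :
    ENNReal.ofReal (1 / θ ((volume (ball a r)).toReal ^ ((1 : ℝ) / n))) ≤
      wMorreyNorm n θ Θ ((ball a r).indicator 1) := by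
  have h0 : volume (ball a r) ≠ 0 := (measure_ball_pos volume a hr).ne'
  have hI := hΘ.invY_pos (one_div_pos.2 (ENNReal.toReal_pos h0 measure_ball_lt_top.ne))
  rw [wMorreyNorm_eq_iSup]
  refine le_iSup₂_of_le a r (le_iSup_of_le hr ?_)
  calc ENNReal.ofReal (1 / θ ((volume (ball a r)).toReal ^ ((1 : ℝ) / n)))
      = ENNReal.ofReal (morreyWeight n θ Θ (volume (ball a r)).toReal) *
          ENNReal.ofReal (1 / invY Θ (1 / (volume (ball a r)).toReal)) := by
        rw [← ENNReal.ofReal_mul' (by positivity), morreyWeight, mul_assoc,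
          mul_one_div_cancel hI.ne', mul_one]
    _ ≤ _ := by
        gcongr; exact one_div_invY_le_wLuxNorm_indicator hΘ h0 measure_ball_lt_top.ne

lemma Gclass.exists_morreyWeight_mul_le (hn : 0 < n) (hΘ : IsYoung Θ) (hθ : Gclass n Θ θ) :
    ∃ K, 0 < K ∧ ∀ v w : ℝ, 0 < v → 0 < w →
      morreyWeight n θ Θ v * (1 / invY Θ (1 / min v w)) ≤ K / θ (w ^ ((1 : ℝ) / n)) := by
  obtain ⟨hpos, hanti, Cg, -, hG⟩ := hθ
  refine ⟨max Cg 1, by positivity, fun v w hv hw => ?_⟩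
  have hθw := hpos _ (Real.rpow_pos_of_pos hw ((1 : ℝ) / n))
  rcases le_total v w with hvw | hwv
  · rw [min_eq_left hvw, morreyWeight, mul_assoc,
      mul_one_div_cancel (hΘ.invY_pos (one_div_pos.2 hv)).ne', mul_one]
    calc 1 / θ (v ^ ((1 : ℝ) / n)) ≤ 1 / θ (w ^ ((1 : ℝ) / n)) :=
          one_div_le_one_div_of_le hθw (hanti _ _ (Real.rpow_pos_of_pos hv _)
            (Real.rpow_le_rpow hv.le hvw (by positivity)))
      _ ≤ max Cg 1 / θ (w ^ ((1 : ℝ) / n)) := by gcongr; exact le_max_right _ _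
  · have hGvw := hG _ _ (Real.rpow_pos_of_pos hw _) (Real.rpow_le_rpow (z := (1 : ℝ) / n) hw.le hwv (by positivity))
    rw [Real.rpow_one_div_natCast_rpow_neg hv hn.ne', Real.rpow_one_div_natCast_rpow_neg hw hn.ne']
      at hGvw
    have hIw := hΘ.invY_pos (one_div_pos.2 hw)
    rw [min_eq_right hwv]
    calc morreyWeight n θ Θ v * (1 / invY Θ (1 / w))
        = invY Θ (1 / v) / θ (v ^ ((1 : ℝ) / n)) / invY Θ (1 / w) := by
          rw [morreyWeight]; ring
      _ ≤ Cg * (invY Θ (1 / w) / θ (w ^ ((1 : ℝ) / n))) / invY Θ (1 / w) := by gcongr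
      _ = Cg / θ (w ^ ((1 : ℝ) / n)) := by field_simp
      _ ≤ max Cg 1 / θ (w ^ ((1 : ℝ) / n)) := by gcongr; exact le_max_left _ _

lemma Gclass.exists_wMorreyNorm_indicator_le (hn : 0 < n) (hΘ : IsYoung Θ)
    (hθ : Gclass n Θ θ) :
    ∃ K, 0 < K ∧ ∀ B : Set (En n), volume B ≠ 0 → volume B ≠ ⊤ →
      wMorreyNorm n θ Θ (B.indicator 1) ≤
        ENNReal.ofReal (K / θ ((volume B).toReal ^ ((1 : ℝ) / n))) := by
  obtain ⟨K, hK, hweight⟩ := hθ.exists_morreyWeight_mul_le hn hΘ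
  refine ⟨K, hK, fun B h0 hB => ?_⟩
  rw [wMorreyNorm_eq_iSup]
  refine iSup₂_le fun a r => iSup_le fun hr => ?_
  set v := (volume (ball a r)).toReal
  set w := (volume B).toReal
  have hv : 0 < v := ENNReal.toReal_pos (measure_ball_pos volume a hr).ne' measure_ball_lt_top.ne
  have hw : 0 < w := ENNReal.toReal_pos h0 hB
  have hinter : volume (ball a r ∩ B) ≤ ENNReal.ofReal (min v w) := by
    rw [ENNReal.ofReal_min, ENNReal.ofReal_toReal measure_ball_lt_top.ne,
      ENNReal.ofReal_toReal hB]
    exact le_min (measure_mono inter_subset_left) (measure_mono inter_subset_right)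
  calc ENNReal.ofReal (morreyWeight n θ Θ v) * wLuxNorm Θ (ball a r) (B.indicator 1)
      ≤ ENNReal.ofReal (morreyWeight n θ Θ v) * ENNReal.ofReal (1 / invY Θ (1 / min v w)) :=
        by
        gcongr; exact wLuxNorm_indicator_le hΘ (lt_min hv hw) hinter
    _ = ENNReal.ofReal (morreyWeight n θ Θ v * (1 / invY Θ (1 / min v w))) :=
        (ENNReal.ofReal_mul' (one_div_pos.2 (hΘ.invY_pos (by positivity))).le).symm
    _ ≤ ENNReal.ofReal (K / θ (w ^ ((1 : ℝ) / n))) :=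
        ENNReal.ofReal_le_ofReal (hweight v w hv hw)

end Morrey

lemma exists_ball_volume_rpow_eq {n : ℕ} (hn : 0 < n) {t : ℝ} (ht : 0 < t) :
    ∃ r, 0 < r ∧ (volume (ball (0 : En n) r)).toReal ^ ((1 : ℝ) / n) = t := by
  set ω := (volume (ball (0 : En n) 1)).toReal
  have hω : 0 < ω :=
    ENNReal.toReal_pos (measure_ball_pos volume 0 one_pos).ne' measure_ball_lt_top.ne
  have hn' : (n : ℝ) ≠ 0 := by positivity
  refine ⟨(t ^ n / ω) ^ ((1 : ℝ) / n), by positivity, ?_⟩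
  rw [Measure.addHaar_ball_of_pos volume 0 (by positivity), finrank_euclideanSpace_fin,
    ENNReal.toReal_mul, ENNReal.toReal_ofReal (by positivity), ← Real.rpow_natCast,
    ← Real.rpow_mul (by positivity), one_div_mul_cancel hn', Real.rpow_one,
    div_mul_cancel₀ _ hω.ne', ← Real.rpow_natCast, ← Real.rpow_mul ht.le,
    mul_one_div_cancel hn', Real.rpow_one]

theorem stmt11 (n : ℕ) (hn : 0 < n) (Θ₁ Θ₂ θ₁ θ₂ : ℝ → ℝ)
    (hΘ₁ : IsYoung Θ₁) (hΘ₂ : IsYoung Θ₂)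
    (hθ₁ : Gclass n Θ₁ θ₁) (hθ₂ : Gclass n Θ₂ θ₂)
    (C : ℝ) (hC : 0 < C)
    (h : ∀ f : En n → ℝ, Measurable f →
      wMorreyNorm n θ₁ Θ₁ f ≤ ENNReal.ofReal C * wMorreyNorm n θ₂ Θ₂ f) :
    ∃ C' : ℝ, 0 < C' ∧ ∀ t : ℝ, 0 < t → θ₂ t ≤ C' * θ₁ t := by
  obtain ⟨K, hK, hupper⟩ := hθ₂.exists_wMorreyNorm_indicator_le hn hΘ₂
  refine ⟨C * K, by positivity, fun t ht => ?_⟩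
  obtain ⟨r, hr, hrt⟩ := exists_ball_volume_rpow_eq hn ht
  set χ := (ball (0 : En n) r).indicator (1 : En n → ℝ)
  have hχ : Measurable χ := measurable_one.indicator measurableSet_ball
  have hbound : ENNReal.ofReal (1 / θ₁ t) ≤ ENNReal.ofReal (C * (K / θ₂ t)) :=
    calc ENNReal.ofReal (1 / θ₁ t) ≤ wMorreyNorm n θ₁ Θ₁ χ :=
          hrt ▸ one_div_le_wMorreyNorm_indicator_ball hΘ₁ 0 hr
      _ ≤ ENNReal.ofReal C * wMorreyNorm n θ₂ Θ₂ χ := h χ hχ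
      _ ≤ ENNReal.ofReal C * ENNReal.ofReal (K / θ₂ t) := by
          gcongr
          exact hrt ▸ hupper _ (measure_ball_pos volume 0 hr).ne' measure_ball_lt_top.ne
      _ = ENNReal.ofReal (C * (K / θ₂ t)) := (ENNReal.ofReal_mul hC.le).symm
  have hθ₁t := hθ₁.1 t ht
  have hθ₂t := hθ₂.1 t ht
  rw [ENNReal.ofReal_le_ofReal_iff (by positivity), ← mul_div_assoc,
    div_le_div_iff₀ hθ₁t hθ₂t] at hbound
  linarith
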